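/- arXiv:2002.01967 — 2 statements merged into one kernel-verified Lean document; each statement's English description precedes it below -/
import Mathlib

section
/- Let R be a ring with an exhaustive increasing filtration 0 = F_{-1} ⊆ F_0 ⊆ F_1 ⊆ ⋯ with ⋃ F_n = R. If the associated graded ring gr R = ⊕_{n≥0} F_n/F_{n-1} is left Noetherian (as a graded ring, i.e. every graded left ideal is finitely generated), then R is left Noetherian. -/
/-- `filtPrev F n` is `F (n-1)`, with the convention `F (-1) = 0`. -/
def filtPrev {R : Type*} [Ring R] (F : ℕ → AddSubgroup R) : ℕ → AddSubgroup R
  | 0 => ⊥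
  | n + 1 => F n

/-!
A left ideal `I` of `R` has a symbol ideal `gr I ⊆ A`, spanned by the symbols in
`F n / F (n-1) ≅ 𝒜 n` of the elements of `I ∩ F n`. Because the symbol map is multiplicative,
the degree-`n` part of `gr I` consists of symbols of elements of `I ∩ F n` only. Hence if
`J ≤ I` and `gr I ≤ gr J`, every `x ∈ I ∩ F n` differs from some `y ∈ J ∩ F n` by an element of
`I ∩ F (n-1)`, and induction on `n` gives `I = J`. So `I ↦ gr I` is strictly monotone into the
homogeneous ideals of `A`, which satisfy the ascending chain condition since they are all finitely
generated.
-/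

theorem HomogeneousIdeal.wellFoundedGT_of_forall_fg {A : Type*} [Semiring A]
    {ι σ : Type*} [DecidableEq ι] [AddMonoid ι] [SetLike σ A] [AddSubmonoidClass σ A]
    {𝒜 : ι → σ} [GradedRing 𝒜] (h : ∀ I : Ideal A, I.IsHomogeneous 𝒜 → I.FG) :
    WellFoundedGT (HomogeneousIdeal 𝒜) := by
  refine wellFoundedGT_iff_monotone_chain_condition.mpr fun a => ?_
  have hcompact : IsCompactElement (⨆ n, a n).toIdeal :=
    (Submodule.fg_iff_compact _).mp (h _ (⨆ n, a n).isHomogeneous)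
  obtain ⟨_, ⟨n, rfl⟩, hn⟩ :=
    (CompleteLattice.isCompactElement_iff_le_of_directed_sSup_le _ _).mp hcompact
      (Set.range fun n => (a n).toIdeal) (Set.range_nonempty _)
      (directedOn_range.mpr (show Monotone fun n => (a n).toIdeal from a.mono).directed_le)
      (HomogeneousIdeal.toIdeal_iSup a).le
  exact ⟨n, fun m hm => le_antisymm (a.mono hm) ((le_iSup a m).trans hn)⟩

section Symbol

variable {R : Type*} [Ring R] {F : ℕ → AddSubgroup R} {A : Type*} [AddCommGroup A]
  {𝒜 : ℕ → AddSubgroup A} (e : ∀ n : ℕ, (↥(F n) ⧸ (filtPrev F n).addSubgroupOf (F n)) ≃+ ↥(𝒜 n))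

def symbol (n : ℕ) : F n →+ A :=
  (𝒜 n).subtype.comp ((e n).toAddMonoidHom.comp (QuotientAddGroup.mk' _))

theorem symbol_apply (n : ℕ) (x : F n) : symbol e n x = e n (QuotientAddGroup.mk x) := rfl

theorem symbol_mem (n : ℕ) (x : F n) : symbol e n x ∈ 𝒜 n := (e n _).2

theorem symbol_eq_zero_iff {n : ℕ} (x : F n) : symbol e n x = 0 ↔ (x : R) ∈ filtPrev F n := by
  rw [symbol_apply, ZeroMemClass.coe_eq_zero, AddEquivClass.map_eq_zero_iff,
    QuotientAddGroup.eq_zero_iff, AddSubgroup.mem_addSubgroupOf]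

theorem exists_symbol_eq {n : ℕ} {a : A} (ha : a ∈ 𝒜 n) : ∃ x : F n, symbol e n x = a := by
  obtain ⟨x, hx⟩ := QuotientAddGroup.mk_surjective ((e n).symm ⟨a, ha⟩)
  exact ⟨x, by rw [symbol_apply, hx, AddEquiv.apply_symm_apply]⟩

def symbolPiece (I : Ideal R) (n : ℕ) : AddSubgroup A :=
  (I.toAddSubgroup.addSubgroupOf (F n)).map (symbol e n)

theorem mem_symbolPiece {I : Ideal R} {n : ℕ} {a : A} :
    a ∈ symbolPiece e I n ↔ ∃ x : F n, (x : R) ∈ I ∧ symbol e n x = a := by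
  simp [symbolPiece, AddSubgroup.mem_addSubgroupOf]

theorem symbolPiece_le (I : Ideal R) (n : ℕ) : symbolPiece e I n ≤ 𝒜 n := by
  rintro _ ⟨x, -, rfl⟩
  exact symbol_mem e n x

theorem symbolPiece_mono {I J : Ideal R} (h : I ≤ J) (n : ℕ) :
    symbolPiece e I n ≤ symbolPiece e J n :=
  AddSubgroup.map_mono fun _ hx => AddSubgroup.mem_addSubgroupOf.mpr (h hx)

end Symbol

section SymbolIdeal

variable {R : Type*} [Ring R] {F : ℕ → AddSubgroup R} {A : Type*} [Ring A]
  {𝒜 : ℕ → AddSubgroup A} [GradedRing 𝒜]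
  (e : ∀ n : ℕ, (↥(F n) ⧸ (filtPrev F n).addSubgroupOf (F n)) ≃+ ↥(𝒜 n))

def symbolIdeal (I : Ideal R) : HomogeneousIdeal 𝒜 :=
  ⟨Ideal.span (⋃ n, (symbolPiece e I n : Set A)), Ideal.homogeneous_span 𝒜 _ <| by
    simp only [Set.mem_iUnion]
    rintro a ⟨n, ha⟩
    exact ⟨n, symbolPiece_le e I n ha⟩⟩

theorem symbolIdeal_mono : Monotone (symbolIdeal e) := fun _ _ h =>
  Ideal.span_mono <| Set.iUnion_mono fun n => symbolPiece_mono e h n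

theorem mem_symbolIdeal_of_mem_symbolPiece {I : Ideal R} {n : ℕ} {a : A}
    (ha : a ∈ symbolPiece e I n) : a ∈ symbolIdeal e I :=
  Ideal.subset_span (Set.mem_iUnion_of_mem n ha)

end SymbolIdeal

section Multiplicative

open DirectSum

variable {R : Type*} [Ring R] {F : ℕ → AddSubgroup R} {A : Type*} [Ring A]
  {𝒜 : ℕ → AddSubgroup A} {e : ∀ n : ℕ, (↥(F n) ⧸ (filtPrev F n).addSubgroupOf (F n)) ≃+ ↥(𝒜 n)}
  {hF_mul : ∀ m n : ℕ, ∀ x y : R, x ∈ F m → y ∈ F n → x * y ∈ F (m + n)}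
  (he_mul : ∀ (m n : ℕ) (x : F m) (y : F n),
    symbol e (m + n) ⟨x * y, hF_mul m n x y x.2 y.2⟩ = symbol e m x * symbol e n y)
include he_mul

theorem mul_mem_symbolPiece {I : Ideal R} {m n : ℕ} {h a : A} (hh : h ∈ 𝒜 m)
    (ha : a ∈ symbolPiece e I n) : h * a ∈ symbolPiece e I (m + n) := by
  obtain ⟨y, hyI, rfl⟩ := (mem_symbolPiece e).mp ha
  obtain ⟨x, rfl⟩ := exists_symbol_eq e hh
  exact (mem_symbolPiece e).mpr ⟨_, I.mul_mem_left _ hyI, he_mul m n x y⟩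

variable [GradedRing 𝒜]

theorem decompose_homogeneous_mul_mem_symbolPiece {I : Ideal R} {m : ℕ} {h b : A}
    (hh : h ∈ 𝒜 m) (hb : ∀ n, (decompose 𝒜 b n : A) ∈ symbolPiece e I n) (n : ℕ) :
    (decompose 𝒜 (h * b) n : A) ∈ symbolPiece e I n := by
  by_cases hmn : m ≤ n
  · obtain ⟨k, rfl⟩ := Nat.exists_eq_add_of_le hmn
    rw [coe_decompose_mul_of_left_mem_of_le 𝒜 hh hmn, Nat.add_sub_cancel_left]
    exact mul_mem_symbolPiece he_mul hh (hb k)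
  · rw [coe_decompose_mul_of_left_mem_of_not_le 𝒜 hh hmn]
    exact zero_mem _

theorem decompose_mem_symbolPiece {I : Ideal R} {b : A} (hb : b ∈ symbolIdeal e I) (n : ℕ) :
    (decompose 𝒜 b n : A) ∈ symbolPiece e I n := by
  induction hb using Submodule.span_induction generalizing n with
  | mem a ha =>
    obtain ⟨m, ha⟩ := Set.mem_iUnion.mp ha
    by_cases hmn : m = n
    · subst hmn
      rwa [decompose_of_mem_same 𝒜 (symbolPiece_le e I m ha)]
    · rw [decompose_of_mem_ne 𝒜 (symbolPiece_le e I m ha) hmn]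
      exact zero_mem _
  | zero => simp
  | add x y _ _ hx hy =>
    rw [decompose_add, DirectSum.add_apply, AddMemClass.coe_add]
    exact add_mem (hx n) (hy n)
  | smul a x _ hx =>
    induction a using DirectSum.Decomposition.inductionOn 𝒜 generalizing n with
    | zero => simp
    | homogeneous h => exact decompose_homogeneous_mul_mem_symbolPiece he_mul h.2 hx n
    | add a a' ha ha' =>
      rw [smul_eq_mul, add_mul, decompose_add, DirectSum.add_apply, AddMemClass.coe_add]
      exact add_mem (ha n) (ha' n)

theorem exists_sub_mem_filtPrev {I J : Ideal R} (hIJ : symbolIdeal e I ≤ symbolIdeal e J)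
    {n : ℕ} (x : F n) (hx : (x : R) ∈ I) :
    ∃ y : F n, (y : R) ∈ J ∧ (x - y : R) ∈ filtPrev F n := by
  have hsymb : symbol e n x ∈ symbolIdeal e J :=
    hIJ (mem_symbolIdeal_of_mem_symbolPiece e ((mem_symbolPiece e).mpr ⟨x, hx, rfl⟩))
  have := decompose_mem_symbolPiece he_mul hsymb n
  rw [decompose_of_mem_same 𝒜 (symbol_mem e n x)] at this
  obtain ⟨y, hyJ, hy⟩ := (mem_symbolPiece e).mp this
  exact ⟨y, hyJ, (symbol_eq_zero_iff e (x - y)).mp (by rw [map_sub, hy, sub_self])⟩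

theorem le_of_symbolIdeal_le (hF : ∀ x : R, ∃ n, x ∈ F n) {I J : Ideal R} (hJI : J ≤ I)
    (hIJ : symbolIdeal e I ≤ symbolIdeal e J) : I ≤ J := by
  suffices h : ∀ n, ∀ x ∈ filtPrev F n, x ∈ I → x ∈ J by
    intro x hx
    obtain ⟨n, hn⟩ := hF x
    exact h (n + 1) x hn hx
  intro n
  induction n with
  | zero =>
    intro x hx _
    rw [AddSubgroup.mem_bot.mp hx]
    exact zero_mem J
  | succ n ih =>
    intro x hxn hxI
    obtain ⟨y, hyJ, hxy⟩ := exists_sub_mem_filtPrev he_mul hIJ ⟨x, hxn⟩ hxI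
    have hxyJ : x - y ∈ J := ih _ hxy (I.sub_mem hxI (hJI hyJ))
    simpa using J.add_mem hxyJ hyJ

theorem symbolIdeal_strictMono (hF : ∀ x : R, ∃ n, x ∈ F n) : StrictMono (symbolIdeal e) :=
  fun _ _ hlt => (symbolIdeal_mono e hlt.le).lt_of_ne fun h =>
    hlt.not_ge (le_of_symbolIdeal_le he_mul hF hlt.le h.ge)

end Multiplicative

theorem noetherian_of_graded_noetherian_general
    (R : Type*) [Ring R] (F : ℕ → AddSubgroup R)
    (hF_exhaustive : ∀ x : R, ∃ n, x ∈ F n)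
    (hF_mul : ∀ m n : ℕ, ∀ x y : R, x ∈ F m → y ∈ F n → x * y ∈ F (m + n))
    (A : Type*) [Ring A] (𝒜 : ℕ → AddSubgroup A) [GradedRing 𝒜]
    (e : ∀ n : ℕ, (↥(F n) ⧸ (filtPrev F n).addSubgroupOf (F n)) ≃+ ↥(𝒜 n))
    (he_mul : ∀ (m n : ℕ) (x : ↥(F m)) (y : ↥(F n)),
      ((e (m + n) (QuotientAddGroup.mk
          (⟨(x : R) * (y : R), hF_mul m n x y x.2 y.2⟩ : ↥(F (m + n)))) : ↥(𝒜 (m + n))) : A) =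
        ((e m (QuotientAddGroup.mk x) : ↥(𝒜 m)) : A) *
          ((e n (QuotientAddGroup.mk y) : ↥(𝒜 n)) : A))
    (hgradedNoeth : ∀ J : Ideal A, Ideal.IsHomogeneous 𝒜 J → J.FG) :
    IsNoetherianRing R :=
  have := HomogeneousIdeal.wellFoundedGT_of_forall_fg hgradedNoeth
  isNoetherian_iff'.mpr (symbolIdeal_strictMono he_mul hF_exhaustive).wellFoundedGT

/-- Let `R` be a ring with an exhaustive increasing filtration
`0 = F_{-1} ⊆ F_0 ⊆ F_1 ⊆ ⋯`, `⋃ F_n = R`, `F_m · F_n ⊆ F_{m+n}`.  If the associated graded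
ring `gr R = ⊕_{n ≥ 0} F_n / F_{n-1}` (here given as an abstract graded ring `A` whose
graded pieces are identified with `F_n / F_{n-1}` compatibly with multiplication) is graded
left Noetherian — every homogeneous left ideal is finitely generated — then `R` is left
Noetherian. -/
theorem noetherian_of_graded_noetherian
    (R : Type*) [Ring R] (F : ℕ → AddSubgroup R)
    (hF_mono : Monotone F)
    (hF_exhaustive : ∀ x : R, ∃ n, x ∈ F n)
    (hF_mul : ∀ m n : ℕ, ∀ x y : R, x ∈ F m → y ∈ F n → x * y ∈ F (m + n))
    (A : Type*) [Ring A] (𝒜 : ℕ → AddSubgroup A) [GradedRing 𝒜]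
    (e : ∀ n : ℕ, (↥(F n) ⧸ (filtPrev F n).addSubgroupOf (F n)) ≃+ ↥(𝒜 n))
    (he_mul : ∀ (m n : ℕ) (x : ↥(F m)) (y : ↥(F n)),
      ((e (m + n) (QuotientAddGroup.mk
          (⟨(x : R) * (y : R), hF_mul m n x y x.2 y.2⟩ : ↥(F (m + n)))) : ↥(𝒜 (m + n))) : A) =
        ((e m (QuotientAddGroup.mk x) : ↥(𝒜 m)) : A) *
          ((e n (QuotientAddGroup.mk y) : ↥(𝒜 n)) : A))
    (hgradedNoeth : ∀ J : Ideal A, Ideal.IsHomogeneous 𝒜 J → J.FG) :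
    IsNoetherianRing R :=
  noetherian_of_graded_noetherian_general R F hF_exhaustive hF_mul A 𝒜 e he_mul hgradedNoeth
end

section
/- The additive submonoid of ℕ^{n+2} consisting of tuples (a_1,…,a_n,r,m) with Σ_i a_i ν_i ≥ m and a_1 + ⋯ + a_n = r (for fixed natural numbers ν_1,…,ν_n) is generated by the finite set of elements (0,…,0,1,0,…,0,1,m) with the 1 in position i and 0 ≤ m ≤ ν_i. -/
/-!
Both defining conditions are additive and hold for the generators, so the generated submonoid
lies in the constrained one. Conversely, induct on `r = ∑ aᵢ`: some `aᵢ` is positive, and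
`(a, r, m)` splits as `(a - eᵢ, r - 1, m - min m νᵢ) + (eᵢ, 1, min m νᵢ)`, where the first
summand still satisfies the weight bound.
-/

open Finset

variable {ι : Type*} [DecidableEq ι]

def basicElements (ν : ι → ℕ) : Set ((ι → ℕ) × ℕ × ℕ) :=
  {p | ∃ i : ι, ∃ m : ℕ, m ≤ ν i ∧ p = (Pi.single i 1, 1, m)}

variable [Fintype ι]

theorem sum_pi_single_one_mul (ν : ι → ℕ) (i : ι) :
    ∑ j, (Pi.single i 1 : ι → ℕ) j * ν j = ν i := by
  simp [Pi.single_apply]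

theorem exists_eq_add_single_of_sum_eq_succ {a : ι → ℕ} {r : ℕ} (h : ∑ i, a i = r + 1) :
    ∃ i, ∃ a' : ι → ℕ, a = a' + Pi.single i 1 ∧ ∑ j, a' j = r := by
  obtain ⟨i, hi⟩ : ∃ i, a i ≠ 0 := by
    by_contra! h0
    simp [h0] at h
  have ha : a = (a - Pi.single i 1) + Pi.single i 1 := by
    ext j
    rcases eq_or_ne j i with rfl | hj
    · simp only [Pi.add_apply, Pi.sub_apply, Pi.single_eq_same]; omega
    · simp [hj]
  refine ⟨i, a - Pi.single i 1, ha, ?_⟩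
  rw [ha] at h
  simpa [sum_add_distrib] using h

variable (ν : ι → ℕ)

def weightBoundedSubmonoid : AddSubmonoid ((ι → ℕ) × ℕ × ℕ) where
  carrier := {p | p.2.2 ≤ ∑ i, p.1 i * ν i ∧ ∑ i, p.1 i = p.2.1}
  zero_mem' := by simp
  add_mem' := by
    rintro ⟨a, r, m⟩ ⟨b, s, k⟩ ⟨hm, hr⟩ ⟨hk, hs⟩
    simp only [Set.mem_ofPred_eq, Prod.mk_add_mk, Pi.add_apply, add_mul, sum_add_distrib] at *
    omega

theorem basicElements_subset_weightBoundedSubmonoid :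
    basicElements ν ⊆ weightBoundedSubmonoid ν := by
  rintro _ ⟨i, m, hm, rfl⟩
  exact ⟨by simpa [sum_pi_single_one_mul] using hm, by simp⟩

theorem mem_closure_basicElements_of_sum_eq {r : ℕ} :
    ∀ (a : ι → ℕ) (m : ℕ), ∑ i, a i = r → m ≤ ∑ i, a i * ν i →
      (a, r, m) ∈ AddSubmonoid.closure (basicElements ν) := by
  induction r with
  | zero =>
    intro a m hr hm
    obtain rfl : a = 0 := funext fun j => sum_eq_zero_iff.mp hr j (mem_univ j)
    obtain rfl : m = 0 := by simpa using hm
    exact zero_mem _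
  | succ r ih =>
    intro a m hr hm
    obtain ⟨i, a', rfl, hr'⟩ := exists_eq_add_single_of_sum_eq_succ hr
    simp only [Pi.add_apply, add_mul, sum_add_distrib, sum_pi_single_one_mul] at hm
    have hsplit : (a' + Pi.single i 1, r + 1, m) =
        (a', r, m - min m (ν i)) + (Pi.single i 1, 1, min m (ν i)) := by
      simp only [Prod.mk_add_mk, Nat.sub_add_cancel (min_le_left m (ν i))]
    rw [hsplit]
    exact add_mem (ih a' _ hr' (by omega))
      (AddSubmonoid.subset_closure ⟨i, _, min_le_right _ _, rfl⟩)

theorem closure_basicElements :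
    AddSubmonoid.closure (basicElements ν) = weightBoundedSubmonoid ν := by
  refine le_antisymm
    (AddSubmonoid.closure_le.2 (basicElements_subset_weightBoundedSubmonoid ν)) ?_
  rintro ⟨a, r, m⟩ ⟨hm, hr⟩
  exact mem_closure_basicElements_of_sum_eq ν a m hr hm

/-- For fixed natural numbers `ν 1, …, ν n`, the additive submonoid of
`ℕ^{n+2}` of tuples `(a, r, m)` with `∑ i, a i * ν i ≥ m` and `∑ i, a i = r`
is generated by the elements `(single i 1, 1, m)` for `1 ≤ i ≤ n` and `0 ≤ m ≤ ν i`. -/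
theorem monoid_generated_by_basic_elements (n : ℕ) (ν : Fin n → ℕ) :
    (AddSubmonoid.closure
        {p : (Fin n → ℕ) × ℕ × ℕ | ∃ i : Fin n, ∃ m : ℕ, m ≤ ν i ∧
          p = (Pi.single i 1, 1, m)} : Set ((Fin n → ℕ) × ℕ × ℕ)) =
      {p : (Fin n → ℕ) × ℕ × ℕ | p.2.2 ≤ ∑ i, p.1 i * ν i ∧ ∑ i, p.1 i = p.2.1} :=
  congrArg SetLike.coe (closure_basicElements ν)
end
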